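/- The set H of matrices M ∈ SL_3(𝔽_7) whose first column has the form (a,0,0)ᵀ (i.e., the entries of M.val in positions (1,0) and (2,0), in 0-indexed notation, are both zero) is a subgroup of SL_3(𝔽_7), and this subgroup is a maximal proper subgroup of SL_3(𝔽_7) (a coatom in the lattice of subgroups). -/
import Mathlib

open Matrix

abbrev SL3 := Matrix.SpecialLinearGroup (Fin 3) (ZMod 7)

namespace BlockUpper

def H : Subgroup SL3 where
  carrier := {M : SL3 | M.val 1 0 = 0 ∧ M.val 2 0 = 0}
  one_mem' := ⟨rfl, rfl⟩
  mul_mem' := by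
    rintro a b ⟨ha1, ha2⟩ ⟨hb1, hb2⟩
    constructor
    · show (a.val * b.val) 1 0 = 0
      rw [Matrix.mul_apply, Fin.sum_univ_three, ha1, hb1, hb2]
      ring
    · show (a.val * b.val) 2 0 = 0
      rw [Matrix.mul_apply, Fin.sum_univ_three, ha2, hb1, hb2]
      ring
  inv_mem' := by
    rintro a ⟨h1, h2⟩
    constructor
    · show (a⁻¹).val 1 0 = 0
      rw [Matrix.SpecialLinearGroup.coe_inv, Matrix.adjugate_fin_three]
      show -(a.val 1 0 * a.val 2 2) + a.val 1 2 * a.val 2 0 = 0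
      rw [h1, h2]
      ring
    · show (a⁻¹).val 2 0 = 0
      rw [Matrix.SpecialLinearGroup.coe_inv, Matrix.adjugate_fin_three]
      show a.val 1 0 * a.val 2 1 - a.val 1 1 * a.val 2 0 = 0
      rw [h1, h2]
      ring

def w0 : SL3 := ⟨!![0, -1, 0; 1, 0, 0; 0, 0, 1], by
  rw [Matrix.det_fin_three]
  show (0:ZMod 7) * 0 * 1 - 0 * 0 * 0 - -1 * 1 * 1 + -1 * 0 * 0 + 0 * 1 * 0 - 0 * 0 * 0 = 1
  ring⟩

lemma w0_not_mem : w0 ∉ H := by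
  intro h
  have h1 : w0.val 1 0 = 0 := h.1
  rw [show w0.val 1 0 = 1 from rfl] at h1
  exact absurd h1 (by decide)

/-- Key lemma: every element outside `H` lies in the double coset `H w0 H`. -/
lemma key (g : SL3) (hg : g ∉ H) : ∃ a ∈ H, ∃ b ∈ H, a * g * b = w0 := by
  haveI : Fact (Nat.Prime 7) := ⟨by norm_num⟩
  set v0 := g.val 0 0 with hv0
  set v1 := g.val 1 0 with hv1
  set v2 := g.val 2 0 with hv2
  have hcase : v1 ≠ 0 ∨ v2 ≠ 0 := by
    by_contra h
    push_neg at h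
    exact hg ⟨h.1, h.2⟩
  -- construct a ∈ H with (a * g) having first column e₁
  have main : ∃ a : SL3, a ∈ H ∧ (a.val * g.val) 0 0 = 0 ∧
      (a.val * g.val) 1 0 = 1 ∧ (a.val * g.val) 2 0 = 0 := by
    rcases eq_or_ne v1 0 with h1 | h1
    · rcases hcase with h | h2
      · exact absurd h1 h
      refine ⟨⟨!![v2, 0, -v0; 0, 0, v2⁻¹; 0, -1, 0], ?_⟩, ⟨rfl, rfl⟩, ?_, ?_, ?_⟩
      · rw [Matrix.det_fin_three]
        show v2 * 0 * 0 - v2 * v2⁻¹ * -1 - 0 * 0 * 0 + 0 * v2⁻¹ * 0 +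
          -v0 * 0 * -1 - -v0 * 0 * 0 = 1
        rw [mul_inv_cancel₀ h2]
        ring
      · rw [Matrix.mul_apply, Fin.sum_univ_three]
        show v2 * v0 + 0 * v1 + -v0 * v2 = 0
        ring
      · rw [Matrix.mul_apply, Fin.sum_univ_three]
        show (0:ZMod 7) * v0 + 0 * v1 + v2⁻¹ * v2 = 1
        rw [inv_mul_cancel₀ h2]
        ring
      · rw [Matrix.mul_apply, Fin.sum_univ_three]
        show (0:ZMod 7) * v0 + -1 * v1 + 0 * v2 = 0
        rw [h1]
        ring
    · refine ⟨⟨!![v1, -v0, 0; 0, v1⁻¹, 0; 0, -v2 * v1⁻¹, 1], ?_⟩, ⟨rfl, rfl⟩, ?_, ?_, ?_⟩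
      · rw [Matrix.det_fin_three]
        show v1 * v1⁻¹ * 1 - v1 * 0 * (-v2 * v1⁻¹) - -v0 * 0 * 1 + -v0 * 0 * 0 +
          0 * 0 * (-v2 * v1⁻¹) - 0 * v1⁻¹ * 0 = 1
        rw [mul_inv_cancel₀ h1]
        ring
      · rw [Matrix.mul_apply, Fin.sum_univ_three]
        show v1 * v0 + -v0 * v1 + 0 * v2 = 0
        ring
      · rw [Matrix.mul_apply, Fin.sum_univ_three]
        show (0:ZMod 7) * v0 + v1⁻¹ * v1 + 0 * v2 = 1
        rw [inv_mul_cancel₀ h1]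
        ring
      · rw [Matrix.mul_apply, Fin.sum_univ_three]
        show (0:ZMod 7) * v0 + -v2 * v1⁻¹ * v1 + 1 * v2 = 0
        rw [mul_assoc (-v2) v1⁻¹ v1, inv_mul_cancel₀ h1]
        ring
  obtain ⟨a, haH, hW0, hW1, hW2⟩ := main
  set W : SL3 := a * g with hW
  have hWc : W.val = a.val * g.val := rfl
  have hinv : ∀ i, (W⁻¹).val i 1 = (1 : Matrix (Fin 3) (Fin 3) (ZMod 7)) i 0 := by
    intro i
    have h := congrFun (congrFun (congrArg (fun M : SL3 => M.val) (inv_mul_cancel W)) i) 0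
    simp only [Matrix.SpecialLinearGroup.coe_mul, Matrix.SpecialLinearGroup.coe_one] at h
    rw [Matrix.mul_apply, Fin.sum_univ_three, hWc, hW0, hW1, hW2] at h
    rw [mul_zero, mul_one, mul_zero, zero_add, add_zero] at h
    exact h
  refine ⟨a, haH, W⁻¹ * w0, ⟨?_, ?_⟩, ?_⟩
  · show ((W⁻¹).val * w0.val) 1 0 = 0
    rw [Matrix.mul_apply, Fin.sum_univ_three]
    have h := hinv 1
    rw [Matrix.one_apply_ne (by decide)] at h
    rw [show w0.val 0 0 = 0 from rfl, show w0.val 1 0 = 1 from rfl,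
      show w0.val 2 0 = 0 from rfl, h]
    ring
  · show ((W⁻¹).val * w0.val) 2 0 = 0
    rw [Matrix.mul_apply, Fin.sum_univ_three]
    have h := hinv 2
    rw [Matrix.one_apply_ne (by decide)] at h
    rw [show w0.val 0 0 = 0 from rfl, show w0.val 1 0 = 1 from rfl,
      show w0.val 2 0 = 0 from rfl, h]
    ring
  · rw [← hW, ← mul_assoc, mul_inv_cancel, one_mul]

end BlockUpper

set_option maxHeartbeats 2000000 in
theorem block_upper_triangular_maximal :
    ∃ H : Subgroup SL3,
      (H : Set SL3) = {M : SL3 | M.val 1 0 = 0 ∧ M.val 2 0 = 0} ∧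
      IsCoatom H := by
  refine ⟨BlockUpper.H, rfl, ?_, ?_⟩
  · intro htop
    exact BlockUpper.w0_not_mem (htop ▸ Subgroup.mem_top BlockUpper.w0)
  · intro K hK
    obtain ⟨g, hgK, hgH⟩ := SetLike.exists_of_lt hK
    rw [eq_top_iff]
    intro x _
    by_cases hx : x ∈ BlockUpper.H
    · exact hK.le hx
    · obtain ⟨a, haH, b, hbH, hab⟩ := BlockUpper.key g hgH
      obtain ⟨c, hcH, d, hdH, hcd⟩ := BlockUpper.key x hx
      have hx' : x = c⁻¹ * (a * g * b) * d⁻¹ := by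
        rw [hab, ← hcd]
        group
      rw [hx']
      have hle := hK.le
      exact K.mul_mem (K.mul_mem (K.inv_mem (hle hcH))
        (K.mul_mem (K.mul_mem (hle haH) hgK) (hle hbH))) (K.inv_mem (hle hdH))
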